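/- arXiv:2106.04156 — 4 statements merged into one kernel-verified Lean document; each statement's English description precedes it below -/
import Mathlib

section
/- Let f : X → ℝ^k and let F ∈ ℝ^{N×k} be the matrix whose x-th row is √(w_x)·f(x). Then ‖Ā − F·Fᵀ‖_F² = L(f) + Σ_{x,x'∈X} w(x,x')²/(w_x·w_{x'}); that is, the matrix approximation loss of F equals the population spectral contrastive loss of f plus an additive constant that does not depend on f. -/
open Finset

/-- **Lemma (spectral contrastive loss = matrix approximation loss up to a constant).**
If the `x`-th row of `F` is `√(w_x)·f(x)`, then
`‖Ā − F Fᵀ‖_F² = L(f) + Σ_{x,x'} w(x,x')²/(w_x w_{x'})`. -/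
theorem stmt4 (X : Type) [Fintype X] [DecidableEq X] (k : ℕ)
    (wf : X → X → ℝ)
    (hsymm : ∀ x x', wf x x' = wf x' x) (hnn : ∀ x x', 0 ≤ wf x x')
    (hsum : ∑ x, ∑ x', wf x x' = 1) (hdeg : ∀ x, 0 < ∑ x', wf x x')
    (f : X → Fin k → ℝ) (F : Matrix X (Fin k) ℝ)
    (hF : ∀ x i, F x i = Real.sqrt (∑ x', wf x x') * f x i) :
    ∑ x, ∑ x',
        (wf x x' / (Real.sqrt (∑ z, wf x z) * Real.sqrt (∑ z, wf x' z))
          - (F * F.transpose) x x') ^ 2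
      = (-2 * ∑ x, ∑ x', wf x x' * (∑ i, f x i * f x' i)
          + ∑ x, ∑ x', (∑ z, wf x z) * (∑ z, wf x' z) * (∑ i, f x i * f x' i) ^ 2)
        + ∑ x, ∑ x', wf x x' ^ 2 / ((∑ z, wf x z) * (∑ z, wf x' z)) := by
  have key : ∀ x x',
      (wf x x' / (Real.sqrt (∑ z, wf x z) * Real.sqrt (∑ z, wf x' z))
        - (F * F.transpose) x x') ^ 2
      = -2 * (wf x x' * (∑ i, f x i * f x' i))
        + (∑ z, wf x z) * (∑ z, wf x' z) * (∑ i, f x i * f x' i) ^ 2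
        + wf x x' ^ 2 / ((∑ z, wf x z) * (∑ z, wf x' z)) := by
    intro x x'
    set s := Real.sqrt (∑ z, wf x z) with hs
    set t := Real.sqrt (∑ z, wf x' z) with ht
    have hs2 : s ^ 2 = ∑ z, wf x z := Real.sq_sqrt (hdeg x).le
    have ht2 : t ^ 2 = ∑ z, wf x' z := Real.sq_sqrt (hdeg x').le
    have hsne : s ≠ 0 := by
      rw [hs]; exact Real.sqrt_ne_zero'.mpr (hdeg x)
    have htne : t ≠ 0 := by
      rw [ht]; exact Real.sqrt_ne_zero'.mpr (hdeg x')
    have hFF : (F * F.transpose) x x' = s * t * ∑ i, f x i * f x' i := by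
      simp only [Matrix.mul_apply, Matrix.transpose_apply, hF, Finset.mul_sum]
      exact Finset.sum_congr rfl fun i _ => by ring
    rw [hFF, ← hs2, ← ht2]
    field_simp
    ring
  rw [Finset.sum_congr rfl fun x _ => Finset.sum_congr rfl fun x' _ => key x x']
  simp only [Finset.sum_add_distrib, Finset.mul_sum, neg_mul]
end

section
/- Let f̂_mf : X → ℝ^k with matrix form F̂_mf ∈ ℝ^{N×k} (whose x-th row is f̂_mf(x)), and define f̂ : X → ℝ^k by f̂(x) := f̂_mf(x)/√(w_x). Then F̂_mf is a global minimizer of the matrix approximation loss L_mf over ℝ^{N×k} if and only if f̂ is a global minimizer of the population spectral contrastive loss L over all functions X → ℝ^k. -/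
open Finset

noncomputable def normAdjW {X : Type} [Fintype X] (wf : X → X → ℝ) : Matrix X X ℝ :=
  Matrix.of fun x x' =>
    wf x x' / (Real.sqrt (∑ z, wf x z) * Real.sqrt (∑ z, wf x' z))

/-- Matrix approximation loss `L_mf(F) = ‖Ā − F Fᵀ‖_F²`. -/
noncomputable def mfLoss {X : Type} [Fintype X] {k : ℕ} (wf : X → X → ℝ)
    (F : Matrix X (Fin k) ℝ) : ℝ :=
  ∑ x, ∑ x', (normAdjW wf x x' - (F * F.transpose) x x') ^ 2

/-- Population spectral contrastive loss over the weighted graph `wf`. -/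
noncomputable def specLossW {X : Type} [Fintype X] {k : ℕ} (wf : X → X → ℝ)
    (f : X → Fin k → ℝ) : ℝ :=
  -2 * ∑ x, ∑ x', wf x x' * (∑ i, f x i * f x' i)
    + ∑ x, ∑ x', (∑ z, wf x z) * (∑ z, wf x' z) * (∑ i, f x i * f x' i) ^ 2

lemma key_lift {X : Type} [Fintype X] {k : ℕ} (wf : X → X → ℝ)
    (hnn : ∀ x x', 0 ≤ wf x x') (hdeg : ∀ x, 0 < ∑ x', wf x x')
    (f : X → Fin k → ℝ) :
    mfLoss wf (Matrix.of fun x i => Real.sqrt (∑ z, wf x z) * f x i)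
      = (∑ x, ∑ x', (normAdjW wf x x') ^ 2) + specLossW wf f := by
  have hs : ∀ x, (0:ℝ) < Real.sqrt (∑ z, wf x z) := fun x => Real.sqrt_pos.2 (hdeg x)
  have hsq : ∀ x, Real.sqrt (∑ z, wf x z) ^ 2 = ∑ z, wf x z := fun x =>
    Real.sq_sqrt (le_of_lt (hdeg x))
  have hterm : ∀ x x',
      (normAdjW wf x x' - ((Matrix.of fun x i => Real.sqrt (∑ z, wf x z) * f x i) *
        (Matrix.of fun x i => Real.sqrt (∑ z, wf x z) * f x i).transpose) x x') ^ 2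
      = (normAdjW wf x x') ^ 2 + ((-2) * (wf x x' * ∑ i, f x i * f x' i)
          + (∑ z, wf x z) * (∑ z, wf x' z) * (∑ i, f x i * f x' i) ^ 2) := by
    intro x x'
    have hmul : ((Matrix.of fun x i => Real.sqrt (∑ z, wf x z) * f x i) *
        (Matrix.of fun x i => Real.sqrt (∑ z, wf x z) * f x i).transpose) x x'
        = Real.sqrt (∑ z, wf x z) * Real.sqrt (∑ z, wf x' z) * ∑ i, f x i * f x' i := by
      rw [Matrix.mul_apply, Finset.mul_sum]
      refine Finset.sum_congr rfl fun i _ => ?_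
      simp [Matrix.transpose_apply]
      ring
    have h1 : normAdjW wf x x' * (Real.sqrt (∑ z, wf x z) * Real.sqrt (∑ z, wf x' z))
        = wf x x' := by
      simp only [normAdjW, Matrix.of_apply]
      exact div_mul_cancel₀ _ (ne_of_gt (mul_pos (hs x) (hs x')))
    rw [hmul]
    linear_combination (-2 * (∑ i, f x i * f x' i)) * h1
      + ((∑ i, f x i * f x' i) ^ 2 * Real.sqrt (∑ z, wf x' z) ^ 2) * hsq x
      + ((∑ i, f x i * f x' i) ^ 2 * (∑ z, wf x z)) * hsq x'
  simp only [mfLoss]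
  rw [Finset.sum_congr rfl fun x _ => Finset.sum_congr rfl fun x' _ => hterm x x']
  simp only [Finset.sum_add_distrib, specLossW, neg_mul, Finset.mul_sum]

/-- **Lemma (equivalence of minimizers):** `F̂_mf` globally minimizes the
matrix approximation loss iff `f̂(x) = f̂_mf(x)/√(w_x)` globally minimizes the
population spectral contrastive loss. -/
theorem stmt9 (X : Type) [Fintype X] [DecidableEq X] (k : ℕ) (wf : X → X → ℝ)
    (hsymm : ∀ x x', wf x x' = wf x' x) (hnn : ∀ x x', 0 ≤ wf x x')
    (hsum : ∑ x, ∑ x', wf x x' = 1) (hdeg : ∀ x, 0 < ∑ x', wf x x')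
    (fmf : X → Fin k → ℝ) (Fmf : Matrix X (Fin k) ℝ)
    (hFmf : ∀ x i, Fmf x i = fmf x i)
    (fhat : X → Fin k → ℝ)
    (hfhat : ∀ x i, fhat x i = fmf x i / Real.sqrt (∑ z, wf x z)) :
    (∀ G : Matrix X (Fin k) ℝ, mfLoss wf Fmf ≤ mfLoss wf G) ↔
      (∀ f : X → Fin k → ℝ, specLossW wf fhat ≤ specLossW wf f) := by
  have hs : ∀ x, (0:ℝ) < Real.sqrt (∑ z, wf x z) := fun x => Real.sqrt_pos.2 (hdeg x)
  have hlift : (Matrix.of fun x i => Real.sqrt (∑ z, wf x z) * fhat x i) = Fmf := by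
    ext x i
    rw [Matrix.of_apply, hfhat, hFmf, mul_comm, div_mul_cancel₀ _ (ne_of_gt (hs x))]
  have hFmfeq : mfLoss wf Fmf
      = (∑ x, ∑ x', (normAdjW wf x x') ^ 2) + specLossW wf fhat := by
    rw [← hlift]; exact key_lift wf hnn hdeg fhat
  constructor
  · intro hF f
    have h := key_lift wf hnn hdeg f
    have := hF (Matrix.of fun x i => Real.sqrt (∑ z, wf x z) * f x i)
    linarith [hFmfeq, h]
  · intro hf G
    set g : X → Fin k → ℝ := fun x i => G x i / Real.sqrt (∑ z, wf x z) with hg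
    have hliftG : (Matrix.of fun x i => Real.sqrt (∑ z, wf x z) * g x i) = G := by
      ext x i
      rw [Matrix.of_apply, hg, mul_comm]
      exact div_mul_cancel₀ _ (ne_of_gt (hs x))
    have h := key_lift wf hnn hdeg g
    rw [hliftG] at h
    have := hf g
    linarith [hFmfeq]
end

section
/- Let ε ≥ 0, let f̂_mf : X → ℝ^k with matrix form F̂_mf ∈ ℝ^{N×k} (whose x-th row is f̂_mf(x)), and define f̂ : X → ℝ^k by f̂(x) := f̂_mf(x)/√(w_x). Then L_mf(F̂_mf) ≤ min_{F∈ℝ^{N×k}} L_mf(F) + ε if and only if L(f̂) ≤ min_{f : X → ℝ^k} L(f) + ε; that is, F̂_mf is an ε-optimal minimizer of the matrix approximation loss if and only if f̂ is an ε-optimal minimizer of the population spectral contrastive loss. -/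
open Finset

lemma key_identity {X : Type} [Fintype X] {k : ℕ} (wf : X → X → ℝ)
    (hdeg : ∀ x, 0 < ∑ x', wf x x') (f : X → Fin k → ℝ) :
    specLossW wf f =
      mfLoss wf (Matrix.of fun x i => Real.sqrt (∑ z, wf x z) * f x i)
        - ∑ x, ∑ x', (normAdjW wf x x') ^ 2 := by
  unfold specLossW mfLoss
  have hent : ∀ x x' : X,
      (normAdjW wf x x' -
        ((Matrix.of fun x i => Real.sqrt (∑ z, wf x z) * f x i) *
         (Matrix.of fun x i => Real.sqrt (∑ z, wf x z) * f x i).transpose) x x') ^ 2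
      = (normAdjW wf x x') ^ 2
        - 2 * (wf x x' * (∑ i, f x i * f x' i))
        + (∑ z, wf x z) * (∑ z, wf x' z) * (∑ i, f x i * f x' i) ^ 2 := by
    intro x x'
    have hx := hdeg x
    have hx' := hdeg x'
    have hs : (0:ℝ) < Real.sqrt (∑ z, wf x z) := Real.sqrt_pos.mpr hx
    have ht : (0:ℝ) < Real.sqrt (∑ z, wf x' z) := Real.sqrt_pos.mpr hx'
    have hs2 : Real.sqrt (∑ z, wf x z) ^ 2 = ∑ z, wf x z := Real.sq_sqrt hx.le
    have ht2 : Real.sqrt (∑ z, wf x' z) ^ 2 = ∑ z, wf x' z := Real.sq_sqrt hx'.le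
    have hB : ((Matrix.of fun x i => Real.sqrt (∑ z, wf x z) * f x i) *
         (Matrix.of fun x i => Real.sqrt (∑ z, wf x z) * f x i).transpose) x x'
        = Real.sqrt (∑ z, wf x z) * Real.sqrt (∑ z, wf x' z) * (∑ i, f x i * f x' i) := by
      rw [Matrix.mul_apply]
      rw [Finset.mul_sum]
      apply Finset.sum_congr rfl
      intro i _
      simp [Matrix.transpose_apply]
      ring
    rw [hB]
    have hA : normAdjW wf x x'
        = wf x x' / (Real.sqrt (∑ z, wf x z) * Real.sqrt (∑ z, wf x' z)) := rfl
    rw [hA]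
    set s := Real.sqrt (∑ z, wf x z) with hsdef
    set t := Real.sqrt (∑ z, wf x' z) with htdef
    have hsne : s ≠ 0 := ne_of_gt hs
    have htne : t ≠ 0 := ne_of_gt ht
    rw [sub_sq]
    have h1 : wf x x' / (s * t) * (s * t * (∑ i, f x i * f x' i))
        = wf x x' * (∑ i, f x i * f x' i) := by
      field_simp
    have h2 : (s * t * (∑ i, f x i * f x' i)) ^ 2
        = (∑ z, wf x z) * (∑ z, wf x' z) * (∑ i, f x i * f x' i) ^ 2 := by
      rw [mul_pow, mul_pow, hs2, ht2]
    rw [h2, mul_assoc 2, h1]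
  calc
    -2 * ∑ x, ∑ x', wf x x' * (∑ i, f x i * f x' i)
      + ∑ x, ∑ x', (∑ z, wf x z) * (∑ z, wf x' z) * (∑ i, f x i * f x' i) ^ 2
      = (∑ x, ∑ x', ((normAdjW wf x x') ^ 2
          - 2 * (wf x x' * (∑ i, f x i * f x' i))
          + (∑ z, wf x z) * (∑ z, wf x' z) * (∑ i, f x i * f x' i) ^ 2))
        - ∑ x, ∑ x', (normAdjW wf x x') ^ 2 := by
        simp only [Finset.sum_add_distrib, Finset.sum_sub_distrib, ← Finset.mul_sum]
        ring
    _ = _ := by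
        congr 1
        apply Finset.sum_congr rfl
        intro x _
        apply Finset.sum_congr rfl
        intro x' _
        exact (hent x x').symm

/-- **Lemma (equivalence of `ε`-optimal minimizers):** `F̂_mf` is an `ε`-optimal
minimizer of the matrix approximation loss iff `f̂(x) = f̂_mf(x)/√(w_x)` is an
`ε`-optimal minimizer of the population spectral contrastive loss. -/
theorem stmt16 (X : Type) [Fintype X] [DecidableEq X] (k : ℕ) (wf : X → X → ℝ)
    (hsymm : ∀ x x', wf x x' = wf x' x) (hnn : ∀ x x', 0 ≤ wf x x')
    (hsum : ∑ x, ∑ x', wf x x' = 1) (hdeg : ∀ x, 0 < ∑ x', wf x x')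
    (ε : ℝ) (hε : 0 ≤ ε)
    (fmf : X → Fin k → ℝ) (Fmf : Matrix X (Fin k) ℝ)
    (hFmf : ∀ x i, Fmf x i = fmf x i)
    (fhat : X → Fin k → ℝ)
    (hfhat : ∀ x i, fhat x i = fmf x i / Real.sqrt (∑ z, wf x z)) :
    (∀ G : Matrix X (Fin k) ℝ, mfLoss wf Fmf ≤ mfLoss wf G + ε) ↔
      (∀ f : X → Fin k → ℝ, specLossW wf fhat ≤ specLossW wf f + ε) := by
  have key := fun f : X → Fin k → ℝ => key_identity wf hdeg f
  have hFeq : (Matrix.of fun x i => Real.sqrt (∑ z, wf x z) * fhat x i) = Fmf := by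
    ext x i
    have hsne : Real.sqrt (∑ z, wf x z) ≠ 0 :=
      ne_of_gt (Real.sqrt_pos.mpr (hdeg x))
    simp only [Matrix.of_apply, hfhat, hFmf]
    field_simp
  constructor
  · intro h f
    rw [key fhat, key f, hFeq]
    have := h (Matrix.of fun x i => Real.sqrt (∑ z, wf x z) * f x i)
    linarith
  · intro h G
    have hh := h (fun x i => G x i / Real.sqrt (∑ z, wf x z))
    rw [key fhat, key, hFeq] at hh
    have hG : (Matrix.of fun x i =>
        Real.sqrt (∑ z, wf x z) * (G x i / Real.sqrt (∑ z, wf x z))) = G := by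
      ext x i
      have hsne : Real.sqrt (∑ z, wf x z) ≠ 0 :=
        ne_of_gt (Real.sqrt_pos.mpr (hdeg x))
      simp only [Matrix.of_apply]
      field_simp
    rw [hG] at hh
    linarith
end

section
/- Let d ∈ ℤ⁺, σ > 0, and τ ≥ 0. For a measurable set S ⊆ ℝ^d and x ∈ ℝ^d, define P(S|x) := Pr_{ξ∼N(0,(σ²/d)·I_d)}[x+ξ ∈ S], where N(0,(σ²/d)·I_d) is the centered isotropic Gaussian on ℝ^d with covariance (σ²/d)·I_d. Let c_σ > 0 be a radius such that Pr_{ξ∼N(0,(σ²/d)·I_d)}[‖ξ‖₂ ≤ c_σ] = 2/3. If x, x' ∈ ℝ^d satisfy P(S|x) ≥ 2/3 and ‖x−x'‖₂ ≤ τ, then P(S|x') ≥ (1/3)·exp(−(2·c_σ·τ + τ²)/(2σ²/d)). -/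
open MeasureTheory ProbabilityTheory
open scoped ENNReal NNReal

lemma lintegral_fin_prod : ∀ (n : ℕ) (f : Fin n → ℝ → ℝ≥0∞), (∀ i, Measurable (f i)) →
    ∫⁻ x : Fin n → ℝ, ∏ i, f i (x i) ∂(Measure.pi fun _ => (volume : Measure ℝ))
      = ∏ i, ∫⁻ y, f i y := by
  intro n
  induction n with
  | zero =>
      intro f _
      simp [Measure.pi_univ]
  | succ n ih =>
      intro f hf
      have hmeas : Measurable fun x : Fin (n+1) → ℝ => ∏ i, f i (x i) :=
        Finset.measurable_prod _ fun i _ => (hf i).comp (measurable_pi_apply i)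
      rw [← ((measurePreserving_piFinSuccAbove (fun _ : Fin (n+1) => (volume : Measure ℝ))
        0).symm).lintegral_comp hmeas]
      simp only [MeasurableEquiv.piFinSuccAbove_symm_apply, Fin.insertNthEquiv,
        Fin.prod_univ_succ, Fin.insertNth_zero, Equiv.coe_fn_mk, Fin.zero_succAbove, cast_eq,
        Fin.cons_zero, Fin.cons_succ]
      have hpm : Measurable fun y : Fin n → ℝ => ∏ x : Fin n, f x.succ (y x) :=
        Finset.measurable_prod _ fun i _ => (hf i.succ).comp (measurable_pi_apply i)
      rw [lintegral_prod_mul (f := f 0) (g := fun y : Fin n → ℝ => ∏ x : Fin n, f x.succ (y x))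
        (hf 0).aemeasurable hpm.aemeasurable]
      rw [ih (fun i => f i.succ) (fun i => hf i.succ)]

lemma ennreal_ofReal_prod {ι : Type*} (s : Finset ι) (f : ι → ℝ) (h : ∀ i ∈ s, 0 ≤ f i) :
    ENNReal.ofReal (∏ i ∈ s, f i) = ∏ i ∈ s, ENNReal.ofReal (f i) := by
  classical
  induction s using Finset.induction with
  | empty => simp
  | insert a t hni ih =>
      rw [Finset.prod_insert hni, Finset.prod_insert hni,
        ENNReal.ofReal_mul (h a (Finset.mem_insert_self a t)),
        ih fun i hi => h i (Finset.mem_insert_of_mem hi)]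

lemma pi_gaussian_eq (d : ℕ) (v : ℝ≥0) (hv : v ≠ 0) :
    Measure.pi (fun _ : Fin d => gaussianReal 0 v)
      = (volume : Measure (Fin d → ℝ)).withDensity fun ξ => ∏ i, gaussianPDF 0 v (ξ i) := by
  refine Measure.pi_eq fun s hs => ?_
  rw [withDensity_apply _ (MeasurableSet.univ_pi hs),
    ← lintegral_indicator (MeasurableSet.univ_pi hs)]
  have hind : ∀ ξ : Fin d → ℝ,
      (Set.pi Set.univ s).indicator (fun ξ => ∏ i, gaussianPDF 0 v (ξ i)) ξ
        = ∏ i, (s i).indicator (gaussianPDF 0 v) (ξ i) := by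
    intro ξ
    by_cases h : ξ ∈ Set.pi Set.univ s
    · rw [Set.indicator_of_mem h]
      exact Finset.prod_congr rfl fun i _ =>
        (Set.indicator_of_mem (h i (Set.mem_univ i)) _).symm
    · rw [Set.indicator_of_notMem h]
      have : ∃ i, ξ i ∉ s i := by simpa [Set.mem_pi] using h
      obtain ⟨i, hi⟩ := this
      exact (Finset.prod_eq_zero (Finset.mem_univ i) (Set.indicator_of_notMem hi _)).symm
  simp_rw [hind]
  rw [show (volume : Measure (Fin d → ℝ)) = Measure.pi fun _ => (volume : Measure ℝ) from
    volume_pi]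
  rw [lintegral_fin_prod d _ (fun i => (measurable_gaussianPDF 0 v).indicator (hs i))]
  refine Finset.prod_congr rfl fun i _ => ?_
  rw [lintegral_indicator (hs i), gaussianReal_apply 0 hv]

/-- **Claim (Gaussian-augmentation overlap):** if `P(S|x) ≥ 2/3` and
`‖x−x'‖₂ ≤ τ`, then `P(S|x') ≥ (1/3)·exp(−(2c_στ+τ²)/(2σ²/d))`, where
`P(S|x) = Pr_{ξ∼N(0,(σ²/d)I_d)}[x+ξ ∈ S]` and `c_σ` is the radius of a
Euclidean ball of Gaussian measure `2/3`. -/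
theorem stmt19 (d : ℕ) (hd : 0 < d) (σ τ : ℝ) (hσ : 0 < σ) (hτ : 0 ≤ τ)
    (μ : Measure (Fin d → ℝ))
    (hμ : μ = Measure.pi fun _ => gaussianReal 0 (Real.toNNReal (σ ^ 2 / d)))
    (cσ : ℝ) (hcσ : 0 < cσ)
    (hball : μ {ξ | Real.sqrt (∑ i, ξ i ^ 2) ≤ cσ} = 2 / 3)
    (S : Set (Fin d → ℝ)) (hS : MeasurableSet S)
    (x x' : Fin d → ℝ)
    (hx : (2 / 3 : ENNReal) ≤ μ {ξ | x + ξ ∈ S})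
    (hxx' : Real.sqrt (∑ i, (x i - x' i) ^ 2) ≤ τ) :
    ENNReal.ofReal ((1 / 3) * Real.exp (-(2 * cσ * τ + τ ^ 2) / (2 * σ ^ 2 / d)))
      ≤ μ {ξ | x' + ξ ∈ S} := by
  have hdpos : (0:ℝ) < d := Nat.cast_pos.mpr hd
  have hspos : (0:ℝ) < σ ^ 2 / d := div_pos (pow_pos hσ 2) hdpos
  set v' : ℝ≥0 := Real.toNNReal (σ ^ 2 / d) with hv'def
  have hv' : v' ≠ 0 := by
    simp only [hv'def, ne_eq, Real.toNNReal_eq_zero, not_le]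
    exact hspos
  have hv'c : (v' : ℝ) = σ ^ 2 / d := Real.coe_toNNReal _ hspos.le
  set G : (Fin d → ℝ) → ℝ≥0∞ := fun ξ => ∏ i, gaussianPDF 0 v' (ξ i) with hGdef
  have hGmeas : Measurable G := Finset.measurable_prod _ fun i _ =>
    (measurable_gaussianPDF 0 v').comp (measurable_pi_apply i)
  have hμG : μ = (volume : Measure (Fin d → ℝ)).withDensity G := by
    rw [hμ]; exact pi_gaussian_eq d v' hv'
  set T : Set (Fin d → ℝ) := {ξ | x + ξ ∈ S} with hTdef
  have hT : MeasurableSet T := hS.preimage (measurable_const_add x)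
  set B : Set (Fin d → ℝ) := {ξ | Real.sqrt (∑ i, ξ i ^ 2) ≤ cσ} with hBdef
  have hB : MeasurableSet B := by
    apply measurableSet_le _ measurable_const
    exact (Finset.measurable_sum _ fun i _ => (measurable_pi_apply i).pow_const 2).sqrt
  have hprob : IsProbabilityMeasure μ := by rw [hμ]; infer_instance
  -- intersection bound
  have h13 : (1/3 : ℝ≥0∞) ≤ μ (T ∩ B) := by
    have hsum : μ (T ∪ B) + μ (T ∩ B) = μ T + μ B := measure_union_add_inter T hB
    have h1 : (1/3 : ℝ≥0∞) + 1 ≤ μ (T ∩ B) + 1 := by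
      calc (1/3 : ℝ≥0∞) + 1 ≤ 2/3 + 2/3 := by
            rw [ENNReal.div_add_div_same]
            rw [show (1:ℝ≥0∞)/3 + 1 = 1/3 + 3/3 by
              rw [ENNReal.div_self (by norm_num) (by norm_num)]]
            rw [ENNReal.div_add_div_same]
            exact ENNReal.div_le_div_right (by norm_num) 3
      _ ≤ μ T + μ B := add_le_add hx hball.ge
      _ = μ (T ∪ B) + μ (T ∩ B) := hsum.symm
      _ ≤ 1 + μ (T ∩ B) := add_le_add_left prob_le_one _
      _ = μ (T ∩ B) + 1 := add_comm _ _
    exact (ENNReal.add_le_add_iff_right ENNReal.one_ne_top).mp h1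
  -- translation
  set w : Fin d → ℝ := x' - x with hwdef
  have hT'eq : {ξ | x' + ξ ∈ S} = (fun ξ => ξ + w) ⁻¹' T := by
    ext ξ
    have hxw : x + (ξ + w) = x' + ξ := by
      funext i
      simp only [hwdef, Pi.add_apply, Pi.sub_apply]
      ring
    simp [hTdef, Set.mem_preimage, hxw]
  have hmap : Measure.map (fun ξ => ξ + w) (volume : Measure (Fin d → ℝ)) = volume := by
    have h : (fun ξ : Fin d → ℝ => ξ + w) = fun ξ => w + ξ := by
      funext ξ; exact add_comm _ _
    rw [h]; exact map_add_left_eq_self volume w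
  have hGsub : Measurable fun y : Fin d → ℝ => G (y - w) :=
    hGmeas.comp (measurable_id.sub measurable_const)
  have hkey : μ {ξ | x' + ξ ∈ S} = ∫⁻ y in T, G (y - w) ∂(volume : Measure (Fin d → ℝ)) := by
    rw [hμG, hT'eq, withDensity_apply _ (hT.preimage (measurable_add_const w))]
    have h := setLIntegral_map (μ := (volume : Measure (Fin d → ℝ))) hT hGsub
      (measurable_add_const w)
    rw [hmap] at h
    rw [h]
    simp_rw [add_sub_cancel_right]
  -- norms
  have hW0 : (0:ℝ) ≤ ∑ i, w i ^ 2 := Finset.sum_nonneg fun i _ => sq_nonneg _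
  have hW : (∑ i, w i ^ 2) ≤ τ ^ 2 := by
    have h1 : ∑ i, w i ^ 2 = ∑ i, (x i - x' i) ^ 2 := by
      refine Finset.sum_congr rfl fun i _ => ?_
      simp only [hwdef, Pi.sub_apply]
      ring
    have h0 : (0:ℝ) ≤ ∑ i, (x i - x' i) ^ 2 := Finset.sum_nonneg fun i _ => sq_nonneg _
    rw [h1]
    nlinarith [Real.sq_sqrt h0, Real.sqrt_nonneg (∑ i, (x i - x' i) ^ 2)]
  -- the density formula
  set D : ℝ := 2 * σ ^ 2 / d with hDdef
  have hDpos : (0:ℝ) < D := by positivity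
  set C : ℝ := ((Real.sqrt (2 * Real.pi * (σ ^ 2 / d)))⁻¹) ^ d with hCdef
  have hC0 : 0 ≤ C := by positivity
  have hGre : ∀ z : Fin d → ℝ,
      G z = ENNReal.ofReal (C * Real.exp (-(∑ i, z i ^ 2) / D)) := by
    intro z
    have h1 : G z = ENNReal.ofReal (∏ i, gaussianPDFReal 0 v' (z i)) :=
      (ennreal_ofReal_prod _ _ fun i _ => (gaussianPDFReal_nonneg 0 v' (z i))).symm
    rw [h1]
    congr 1
    simp only [gaussianPDFReal, sub_zero, hv'c]
    rw [Finset.prod_mul_distrib, Finset.prod_const, ← Real.exp_sum,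
      Finset.card_univ, Fintype.card_fin]
    congr 1
    rw [← Finset.sum_div, ← Finset.sum_neg_distrib]
    rw [show (2:ℝ) * (σ ^ 2 / ↑d) = D from by rw [hDdef]; ring]
  -- pointwise bound
  set c : ℝ := (2 * cσ * τ + τ ^ 2) / D with hcdef
  have hpoint : ∀ y ∈ T ∩ B, ENNReal.ofReal (Real.exp (-c)) * G y ≤ G (y - w) := by
    intro y hy
    have hyB : Real.sqrt (∑ i, y i ^ 2) ≤ cσ := hy.2
    have hQ0 : (0:ℝ) ≤ ∑ i, y i ^ 2 := Finset.sum_nonneg fun i _ => sq_nonneg _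
    have hQ : (∑ i, y i ^ 2) ≤ cσ ^ 2 := by
      nlinarith [Real.sq_sqrt hQ0, Real.sqrt_nonneg (∑ i, y i ^ 2)]
    have hP : (∑ i, y i * w i) ^ 2 ≤ (∑ i, y i ^ 2) * (∑ i, w i ^ 2) :=
      Finset.sum_mul_sq_le_sq_mul_sq Finset.univ _ _
    have hPabs : |∑ i, y i * w i| ≤ cσ * τ := by
      apply le_of_pow_le_pow_left₀ two_ne_zero (mul_nonneg hcσ.le hτ)
      rw [sq_abs]
      calc (∑ i, y i * w i) ^ 2 ≤ (∑ i, y i ^ 2) * (∑ i, w i ^ 2) := hP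
      _ ≤ cσ ^ 2 * τ ^ 2 := mul_le_mul hQ hW hW0 (sq_nonneg cσ)
      _ = (cσ * τ) ^ 2 := by ring
    have hexpand : ∑ i, (y i - w i) ^ 2
        = (∑ i, y i ^ 2) - 2 * (∑ i, y i * w i) + ∑ i, w i ^ 2 := by
      simp_rw [sub_sq, mul_assoc]
      rw [Finset.sum_add_distrib, Finset.sum_sub_distrib, ← Finset.mul_sum]
    have hQ' : ∑ i, (y i - w i) ^ 2 ≤ (∑ i, y i ^ 2) + (2 * cσ * τ + τ ^ 2) := by
      have := neg_abs_le (∑ i, y i * w i)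
      linarith
    rw [hGre y, hGre (y - w)]
    rw [← ENNReal.ofReal_mul (Real.exp_nonneg _)]
    apply ENNReal.ofReal_le_ofReal
    have hsub : ∑ i, (y - w) i ^ 2 = ∑ i, (y i - w i) ^ 2 := by
      simp [Pi.sub_apply]
    rw [hsub]
    calc Real.exp (-c) * (C * Real.exp (-(∑ i, y i ^ 2) / D))
        = C * Real.exp (-c + -(∑ i, y i ^ 2) / D) := by
          rw [Real.exp_add]; ring
    _ ≤ C * Real.exp (-(∑ i, (y i - w i) ^ 2) / D) := by
          apply mul_le_mul_of_nonneg_left _ hC0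
          apply Real.exp_le_exp.mpr
          calc -c + -(∑ i, y i ^ 2) / D
              = (-(2 * cσ * τ + τ ^ 2) + -(∑ i, y i ^ 2)) / D := by rw [hcdef]; ring
          _ ≤ -(∑ i, (y i - w i) ^ 2) / D := by
                gcongr
                linarith
  -- assemble
  have hfinal : ENNReal.ofReal (Real.exp (-c)) * (1/3 : ℝ≥0∞) ≤ μ {ξ | x' + ξ ∈ S} := by
    calc ENNReal.ofReal (Real.exp (-c)) * (1/3 : ℝ≥0∞)
        ≤ ENNReal.ofReal (Real.exp (-c)) * μ (T ∩ B) := mul_le_mul_right h13 _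
    _ = ∫⁻ y in T ∩ B, ENNReal.ofReal (Real.exp (-c)) * G y ∂(volume : Measure (Fin d → ℝ)) := by
          rw [lintegral_const_mul _ hGmeas]
          congr 1
          rw [hμG, withDensity_apply _ (hT.inter hB)]
    _ ≤ ∫⁻ y in T ∩ B, G (y - w) ∂(volume : Measure (Fin d → ℝ)) :=
          setLIntegral_mono hGsub hpoint
    _ ≤ ∫⁻ y in T, G (y - w) ∂(volume : Measure (Fin d → ℝ)) :=
          lintegral_mono_set Set.inter_subset_left
    _ = μ {ξ | x' + ξ ∈ S} := hkey.symm
  refine le_trans ?_ hfinal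
  have hnc : -(2 * cσ * τ + τ ^ 2) / D = -c := by rw [hcdef, neg_div]
  rw [hnc, ENNReal.ofReal_mul (by norm_num : (0:ℝ) ≤ 1/3)]
  have h3 : ENNReal.ofReal ((1:ℝ)/3) = (1/3 : ℝ≥0∞) := by
    rw [ENNReal.ofReal_div_of_pos (by norm_num), ENNReal.ofReal_one, ENNReal.ofReal_ofNat]
  rw [h3, mul_comm]
end
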